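/- The category Weil has finite coproducts, given by the tensor product of augmented ℕ-algebras: for Weil-algebras A = ℕ[x₁,…,xₙ]/(xᵢxⱼ : i ∼ j) and A' = ℕ[x₁,…,x_{n'}]/(xᵢxⱼ : i ∼' j), the Weil-algebra A ⊗ A' := ℕ[x₁,…,x_{n+n'}]/(xᵢxⱼ : i ∼'' j) — where i ∼'' j iff (i,j ≤ n and i ∼ j) or (i,j ≥ n+1 and (i−n) ∼' (j−n)) — together with the two evident inclusions of generators, satisfies the universal property of the coproduct of A and A' in Weil. -/

import Mathlib

/-! Ring homomorphisms out of a presented Weil-algebra into a commutative semiring `S` are the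
same as assignments `v` of the generators with `v i * v j = 0` whenever `i ∼ j` (on constants
there is no choice, `ℕ` being initial). The relations of `P ⊗ P'` are those of `P` on the left
generators and those of `P'` on the right ones, so such an assignment for `P ⊗ P'` is exactly a
pair of assignments for `P` and `P'`. -/

open MvPolynomial

/-- A presentation of a Weil-algebra: a finite set of generators together with a
reflexive symmetric relation `sim`; the algebra is `ℕ[xᵢ]/(xᵢxⱼ : sim i j)`. -/
structure WeilPres where
  ι : Type
  fintypeI : Fintype ι
  sim : ι → ι → Prop
  refl : ∀ i, sim i i
  symm : ∀ i j, sim i j → sim j i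

attribute [instance] WeilPres.fintypeI

/-- The underlying commutative semiring `ℕ[x₁,…,xₙ]/(xᵢxⱼ : i ∼ j)` of a Weil presentation. -/
def WeilPres.Carrier (P : WeilPres) : Type :=
  (ringConGen fun p q : MvPolynomial P.ι ℕ =>
    ∃ i j, P.sim i j ∧ p = X i * X j ∧ q = 0).Quotient

noncomputable instance (P : WeilPres) : CommSemiring P.Carrier :=
  inferInstanceAs (CommSemiring (RingCon.Quotient _))

/-- The generator `xᵢ` of the Weil-algebra presented by `P`. -/
noncomputable def WeilPres.gen (P : WeilPres) (i : P.ι) : P.Carrier :=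
  RingCon.mk' _ (X i)

/-- Tensor product (coproduct) of Weil presentations: concatenation of generators. -/
def WeilPres.tensor (P Q : WeilPres) : WeilPres where
  ι := P.ι ⊕ Q.ι
  fintypeI := inferInstance
  sim := Sum.LiftRel P.sim Q.sim
  refl i := by cases i with
    | inl a => exact Sum.LiftRel.inl (P.refl a)
    | inr a => exact Sum.LiftRel.inr (Q.refl a)
  symm i j h := by cases h with
    | inl h => exact Sum.LiftRel.inl (P.symm _ _ h)
    | inr h => exact Sum.LiftRel.inr (Q.symm _ _ h)

/-- `Wⁿ = ℕ[x₁,…,xₙ]/(xᵢxⱼ)`: all pairwise products of generators vanish. -/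
def WnPres (n : ℕ) : WeilPres where
  ι := Fin n
  fintypeI := inferInstance
  sim _ _ := True
  refl _ := trivial
  symm _ _ _ := trivial

/-- `ℕ` itself, as the Weil-algebra with no generators. -/
def NPres : WeilPres where
  ι := Empty
  fintypeI := inferInstance
  sim _ _ := True
  refl _ := trivial
  symm _ _ _ := trivial

namespace WeilPres

variable (P : WeilPres)

noncomputable abbrev con : RingCon (MvPolynomial P.ι ℕ) :=
  ringConGen fun p q => ∃ i j, P.sim i j ∧ p = X i * X j ∧ q = 0

theorem gen_mul_gen_of_sim {i j : P.ι} (h : P.sim i j) : P.gen i * P.gen j = 0 := by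
  change P.con.mk' (X i) * P.con.mk' (X j) = P.con.mk' 0
  rw [← map_mul]
  exact P.con.eq.2 (RingConGen.Rel.of _ _ ⟨i, j, h, rfl, rfl⟩)

section Lift

variable {S : Type*} [CommSemiring S] (v : P.ι → S)

noncomputable def lift (hv : ∀ i j, P.sim i j → v i * v j = 0) : P.Carrier →+* S :=
  P.con.lift (eval₂Hom (Nat.castRingHom S) v) <| RingCon.ringConGen_le.2 <| by
    rintro _ _ ⟨i, j, h, rfl, rfl⟩
    simp only [RingCon.ker_apply, map_mul, eval₂Hom_X', map_zero, hv i j h]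

@[simp]
theorem lift_gen (hv : ∀ i j, P.sim i j → v i * v j = 0) (i : P.ι) :
    P.lift v hv (P.gen i) = v i :=
  eval₂_X _ _ _

end Lift

theorem hom_ext {S : Type*} [Semiring S] {f g : P.Carrier →+* S}
    (h : ∀ i, f (P.gen i) = g (P.gen i)) : f = g :=
  RingCon.Quotient.hom_ext (c := P.con) (ringHom_ext' (Subsingleton.elim _ _) h)

variable (Q : WeilPres)

noncomputable def inl : P.Carrier →+* (P.tensor Q).Carrier :=
  P.lift (fun a => (P.tensor Q).gen (Sum.inl a)) fun _ _ h =>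
    (P.tensor Q).gen_mul_gen_of_sim (Sum.LiftRel.inl h)

noncomputable def inr : Q.Carrier →+* (P.tensor Q).Carrier :=
  Q.lift (fun b => (P.tensor Q).gen (Sum.inr b)) fun _ _ h =>
    (P.tensor Q).gen_mul_gen_of_sim (Sum.LiftRel.inr h)

@[simp]
theorem inl_gen (a : P.ι) : inl P Q (P.gen a) = (P.tensor Q).gen (Sum.inl a) :=
  lift_gen _ _ _ a

@[simp]
theorem inr_gen (b : Q.ι) : inr P Q (Q.gen b) = (P.tensor Q).gen (Sum.inr b) :=
  lift_gen _ _ _ b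

variable {P Q} {S : Type*}

theorem tensor_hom_ext [Semiring S] {h k : (P.tensor Q).Carrier →+* S}
    (hl : h.comp (inl P Q) = k.comp (inl P Q)) (hr : h.comp (inr P Q) = k.comp (inr P Q)) :
    h = k :=
  hom_ext _ fun
    | .inl a => by simpa using congr($hl (P.gen a))
    | .inr b => by simpa using congr($hr (Q.gen b))

variable [CommSemiring S] (f : P.Carrier →+* S) (g : Q.Carrier →+* S)

noncomputable def coprod : (P.tensor Q).Carrier →+* S :=
  (P.tensor Q).lift (Sum.elim (f ∘ P.gen) (g ∘ Q.gen)) <| by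
    rintro _ _ (⟨h⟩ | ⟨h⟩) <;>
      simp only [Sum.elim_inl, Sum.elim_inr, Function.comp_apply, ← map_mul,
        gen_mul_gen_of_sim _ h, map_zero]

@[simp]
theorem coprod_comp_inl : (coprod f g).comp (inl P Q) = f :=
  hom_ext _ fun a => (congrArg (coprod f g) (inl_gen P Q a)).trans (lift_gen _ _ _ _)

@[simp]
theorem coprod_comp_inr : (coprod f g).comp (inr P Q) = g :=
  hom_ext _ fun b => (congrArg (coprod f g) (inr_gen P Q b)).trans (lift_gen _ _ _ _)

end WeilPres

/-- The tensor product `A ⊗ A'` (concatenation of generators), with the two evident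
inclusions of generators, is the coproduct of `A` and `A'` in the category `Weil`. -/
theorem weil_tensor_is_coproduct (P P' : WeilPres) :
    ∃ (ι₁ : P.Carrier →+* (P.tensor P').Carrier) (ι₂ : P'.Carrier →+* (P.tensor P').Carrier),
      (∀ a : P.ι, ι₁ (P.gen a) = (P.tensor P').gen (Sum.inl a)) ∧
      (∀ b : P'.ι, ι₂ (P'.gen b) = (P.tensor P').gen (Sum.inr b)) ∧
      ∀ (Q : WeilPres) (f : P.Carrier →+* Q.Carrier) (g : P'.Carrier →+* Q.Carrier),
        ∃! h : (P.tensor P').Carrier →+* Q.Carrier, h.comp ι₁ = f ∧ h.comp ι₂ = g := by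
  open WeilPres in
  refine ⟨inl P P', inr P P', inl_gen P P', inr_gen P P', fun _ f g =>
    ⟨coprod f g, ⟨coprod_comp_inl f g, coprod_comp_inr f g⟩, fun h ⟨hf, hg⟩ => ?_⟩⟩
  exact tensor_hom_ext (hf.trans (coprod_comp_inl f g).symm) (hg.trans (coprod_comp_inr f g).symm)
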